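/- Let V : ℂ^{d_A} → ℂ^{M} be an isometry (V†V = 1_A), {|z⟩}_{z=1}^{M} an orthonormal basis of ℂ^{M}, and ρ_A a density matrix on ℂ^{d_A} with D(ρ_A, 1_A/d_A) ≤ δ where δ ≤ 1/(2 d_A). Set r_z := (1/d_A)⟨z|V V†|z⟩. Then for every z, ⟨z|V √ρ_A V†|z⟩ ≥ r_z √(d_A (1 − 2 d_A δ)). -/

import Mathlib

/- Common definitions: trace norm, trace distance, Kronecker powers, outer products,
post-measurement ensembles, row ensembles of isometries, and Haar moment operators. -/

open scoped BigOperators ComplexConjugate ComplexOrder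
open MeasureTheory Matrix

noncomputable section

instance {m n : Type*} : MeasurableSpace (Matrix m n ℂ) := borel _
instance {m n : Type*} : BorelSpace (Matrix m n ℂ) := ⟨rfl⟩

/-- Square root of a positive semidefinite matrix (removed from Mathlib; old definition). -/
def Matrix.PosSemidef.sqrt {n 𝕜 : Type*} [Fintype n] [DecidableEq n] [RCLike 𝕜]
    {A : Matrix n n 𝕜} (hA : A.PosSemidef) : Matrix n n 𝕜 :=
  hA.1.eigenvectorUnitary.1 * diagonal ((↑) ∘ Real.sqrt ∘ hA.1.eigenvalues) *
    (star hA.1.eigenvectorUnitary : Matrix n n 𝕜)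

/-- The trace norm (Schatten 1-norm) `‖A‖₁ = Tr[√(AᴴA)]`. -/
def traceNorm {n : Type*} [Fintype n] [DecidableEq n] (A : Matrix n n ℂ) : ℝ :=
  ((Matrix.posSemidef_conjTranspose_mul_self A).sqrt.trace).re

/-- The trace distance `D(A,B) = ‖A - B‖₁ / 2`. -/
def traceDist {n : Type*} [Fintype n] [DecidableEq n] (A B : Matrix n n ℂ) : ℝ :=
  traceNorm (A - B) / 2

/-- The Hilbert-Schmidt (Frobenius) norm `‖A‖₂ = √(Tr[AᴴA])`. -/
def hsNorm {m n : Type*} [Fintype m] [Fintype n] (A : Matrix m n ℂ) : ℝ :=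
  Real.sqrt ((Aᴴ * A).trace).re

/-- The `k`-fold tensor (Kronecker) power of a matrix on `ℂ^d`,
as an operator on `(ℂ^d)^{⊗ k}`. -/
def tpow {d : ℕ} (ρ : Matrix (Fin d) (Fin d) ℂ) (k : ℕ) :
    Matrix (Fin k → Fin d) (Fin k → Fin d) ℂ :=
  Matrix.of fun x y => ∏ i, ρ (x i) (y i)

/-- The tensor product `ρ^{⊗ l} ⊗ A ⊗ ρ^{⊗ (k - (l+1))}` on `(ℂ^d)^{⊗ k}`,
with `A` inserted at position `l`. -/
def tpowIns {d : ℕ} (ρ A : Matrix (Fin d) (Fin d) ℂ) (k l : ℕ) :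
    Matrix (Fin k → Fin d) (Fin k → Fin d) ℂ :=
  Matrix.of fun x y => ∏ i : Fin k, if (i : ℕ) = l then A (x i) (y i) else ρ (x i) (y i)

/-- The outer product (rank-one projection for a unit vector) `|v⟩⟨v|`. -/
def outer {d : ℕ} (v : Fin d → ℂ) : Matrix (Fin d) (Fin d) ℂ :=
  Matrix.of fun i j => v i * star (v j)

/-- Squared Euclidean norm of a vector in `ℂ^d`. -/
def nsq {d : ℕ} (v : Fin d → ℂ) : ℝ := ∑ i, Complex.normSq (v i)

/-- Euclidean norm of a vector in `ℂ^d`. -/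
def l2norm {d : ℕ} (v : Fin d → ℂ) : ℝ := Real.sqrt (nsq v)

/-- The normalization `v / ‖v‖` of a vector. -/
def normalizeVec {d : ℕ} (v : Fin d → ℂ) : Fin d → ℂ :=
  fun i => v i / (Real.sqrt (nsq v) : ℂ)

/-- For an unnormalized vector `v` with weight `p = ‖v‖²`, the contribution
`p (|v/‖v‖⟩⟨v/‖v‖|)^{⊗ k}` to a `k`-th moment operator (zero when `v = 0`,
i.e. the ensemble member occurs with probability zero). -/
def momentTerm {d : ℕ} (v : Fin d → ℂ) (k : ℕ) :
    Matrix (Fin k → Fin d) (Fin k → Fin d) ℂ :=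
  if v = 0 then 0 else ((nsq v : ℝ) : ℂ) • tpow (outer (normalizeVec v)) k

/-- The `k`-th moment operator `∑_{z : v_z ≠ 0} p_z (|ψ_z⟩⟨ψ_z|)^{⊗ k}` of the row ensemble
induced by `V : ℂ^{d_A} → ℂ^M` with respect to the orthonormal basis `e` of `ℂ^M`:
`⟨v_z| := ⟨z|V`, `|ψ_z⟩ := |v_z⟩/‖v_z‖`, `p_z := ‖v_z‖²/d_A`. -/
def rowMoment {dA M : ℕ} (V : Matrix (Fin M) (Fin dA) ℂ) (e : Fin M → Fin M → ℂ) (k : ℕ) :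
    Matrix (Fin k → Fin dA) (Fin k → Fin dA) ℂ :=
  ((dA : ℂ))⁻¹ • ∑ z, momentTerm (fun j => star (Matrix.vecMul (star (e z)) V j)) k

/-- The `k`-th moment operator `∑_{z : p_z > 0} p_z (|ψ_z⟩⟨ψ_z|)^{⊗ k}` of the
post-measurement ensemble of the pure state `Ψ ∈ ℂ^{d_A} ⊗ ℂ^M` measured on the second
factor in the orthonormal basis `b`: `p_z := ⟨Ψ|(1 ⊗ |b_z⟩⟨b_z|)|Ψ⟩` and
`|ψ_z⟩ := (1 ⊗ ⟨b_z|)|Ψ⟩ / √p_z`. -/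
def postMoment {dA M : ℕ} (Ψ : Fin dA × Fin M → ℂ) (b : Fin M → (Fin M → ℂ)) (k : ℕ) :
    Matrix (Fin k → Fin dA) (Fin k → Fin dA) ℂ :=
  ∑ z, momentTerm (fun i => dotProduct (star (b z)) (fun w => Ψ (i, w))) k

/-- The `k`-th Haar moment operator `∫ (U|e₁⟩⟨e₁|Uᴴ)^{⊗ k} dU` on `(ℂ^d)^{⊗ k}`,
where `ν` is the (normalized) Haar measure on the unitary group `U(d)`. -/
def haarMoment {d : ℕ} [NeZero d] (ν : Measure (Matrix.unitaryGroup (Fin d) ℂ)) (k : ℕ) :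
    Matrix (Fin k → Fin d) (Fin k → Fin d) ℂ :=
  Matrix.of fun x y =>
    ∫ U, (∏ i, ((U : Matrix (Fin d) (Fin d) ℂ) (x i) 0 *
      star ((U : Matrix (Fin d) (Fin d) ℂ) (y i) 0))) ∂ν

open scoped MatrixOrder in
theorem Matrix.PosSemidef.eq_sqrt_of_sq_eq {n : Type*} [Fintype n] [DecidableEq n]
    {A : Matrix n n ℂ} (hA : A.PosSemidef) (B : Matrix n n ℂ) (hAB : A ^ 2 = B)
    {hB : B.PosSemidef} : A = hB.sqrt := by
  have h1 : hB.sqrt = CFC.sqrt B := by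
    rw [CFC.sqrt_eq_real_sqrt B hB.nonneg, cfcₙ_eq_cfc (hf0 := Real.sqrt_zero), hB.1.cfc_eq]
    rfl
  rw [h1]
  exact (CFC.sqrt_unique (by rw [← pow_two]; exact hAB) hA.nonneg).symm

private lemma trace_conj_diag {n : ℕ} (U : Matrix.unitaryGroup (Fin n) ℂ)
    (D : Matrix (Fin n) (Fin n) ℂ) :
    ((U : Matrix (Fin n) (Fin n) ℂ) * D * star (U : Matrix (Fin n) (Fin n) ℂ)).trace = D.trace := by
  rw [Matrix.trace_mul_cycle, Matrix.mul_assoc, ← Matrix.mul_assoc, Matrix.UnitaryGroup.star_mul_self, Matrix.one_mul]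

private lemma quad_conj_diag {n : ℕ} (U : Matrix.unitaryGroup (Fin n) ℂ)
    (f : Fin n → ℝ) (w : Fin n → ℂ) :
    dotProduct (star w)
      (((U : Matrix (Fin n) (Fin n) ℂ) * Matrix.diagonal ((↑) ∘ f) *
        star (U : Matrix (Fin n) (Fin n) ℂ)) *ᵥ w)
      = ∑ i, ((f i : ℂ) * Complex.normSq ((star (U : Matrix (Fin n) (Fin n) ℂ) *ᵥ w) i)) := by
  set u := star (U : Matrix (Fin n) (Fin n) ℂ) *ᵥ w with hu
  have h1 : star w ᵥ* (U : Matrix (Fin n) (Fin n) ℂ) = star u := by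
    rw [hu, Matrix.star_mulVec, Matrix.star_eq_conjTranspose, Matrix.conjTranspose_conjTranspose]
  rw [← Matrix.mulVec_mulVec, ← Matrix.mulVec_mulVec, Matrix.dotProduct_mulVec, h1, ← hu]
  simp only [dotProduct, Matrix.mulVec_diagonal, Pi.star_apply, Function.comp_apply]
  refine Finset.sum_congr rfl fun i _ => ?_
  simp only [RCLike.star_def, ← Complex.mul_conj]
  ring

private lemma conj_diag_mul {n : ℕ} (U : Matrix.unitaryGroup (Fin n) ℂ)
    (f g : Fin n → ℝ) :
    ((U : Matrix (Fin n) (Fin n) ℂ) * Matrix.diagonal ((↑) ∘ f) * star (U : Matrix (Fin n) (Fin n) ℂ)) *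
    ((U : Matrix (Fin n) (Fin n) ℂ) * Matrix.diagonal ((↑) ∘ g) * star (U : Matrix (Fin n) (Fin n) ℂ))
    = (U : Matrix (Fin n) (Fin n) ℂ) * Matrix.diagonal ((↑) ∘ (f * g)) * star (U : Matrix (Fin n) (Fin n) ℂ) := by
  have h := Matrix.UnitaryGroup.star_mul_self U
  have hd : Matrix.diagonal ((↑) ∘ f : Fin n → ℂ) * Matrix.diagonal ((↑) ∘ g) =
      Matrix.diagonal ((↑) ∘ (f * g)) := by
    rw [Matrix.diagonal_mul_diagonal]
    ext i j
    by_cases hij : i = j <;> simp [Matrix.diagonal_apply, hij]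
  simp only [Matrix.mul_assoc]
  rw [← Matrix.mul_assoc (star (U : Matrix (Fin n) (Fin n) ℂ)) (U : Matrix (Fin n) (Fin n) ℂ) _,
    h, Matrix.one_mul, ← Matrix.mul_assoc (Matrix.diagonal ((↑) ∘ f) : Matrix (Fin n) (Fin n) ℂ), hd]

private lemma eigenvalue_bound {dA : ℕ} [NeZero dA]
    (ρA : Matrix (Fin dA) (Fin dA) ℂ) (hρ : ρA.PosSemidef) (hρtr : ρA.trace = 1)
    (δ : ℝ) (hδ : traceDist ρA ((dA : ℂ)⁻¹ • 1) ≤ δ) :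
    ∀ i, (dA : ℝ)⁻¹ - 2 * δ ≤ hρ.1.eigenvalues i := by
  set U := hρ.1.eigenvectorUnitary with hU
  set lam := hρ.1.eigenvalues with hlam
  set x : Fin dA → ℝ := fun i => lam i - (dA : ℝ)⁻¹ with hx
  have hone : (dA : ℂ)⁻¹ • (1 : Matrix (Fin dA) (Fin dA) ℂ)
      = (U : Matrix (Fin dA) (Fin dA) ℂ) * Matrix.diagonal ((↑) ∘ (fun _ : Fin dA => (dA : ℝ)⁻¹)) *
        star (U : Matrix (Fin dA) (Fin dA) ℂ) := by
    have h1 : Matrix.diagonal ((↑) ∘ (fun _ : Fin dA => (dA : ℝ)⁻¹))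
        = (dA : ℂ)⁻¹ • (1 : Matrix (Fin dA) (Fin dA) ℂ) := by
      ext i j
      by_cases hij : i = j <;> simp [hij, Matrix.diagonal, Matrix.one_apply]
    rw [h1, Matrix.mul_smul, Matrix.mul_one, Matrix.smul_mul,
      Matrix.mem_unitaryGroup_iff.mp U.2]
  have hΔ : ρA - (dA : ℂ)⁻¹ • 1
      = (U : Matrix (Fin dA) (Fin dA) ℂ) * Matrix.diagonal ((↑) ∘ x) *
        star (U : Matrix (Fin dA) (Fin dA) ℂ) := by
    conv_lhs => rw [hρ.1.spectral_theorem, Unitary.conjStarAlgAut_apply, hone]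
    rw [← Matrix.sub_mul, ← Matrix.mul_sub, Matrix.diagonal_sub]
    congr 2
    ext i j
    by_cases hij : i = j <;> simp [Matrix.diagonal_apply, hij, hx, hlam]
  have hBpsd : Matrix.PosSemidef ((U : Matrix (Fin dA) (Fin dA) ℂ) *
      Matrix.diagonal ((↑) ∘ (fun i => |x i|)) * star (U : Matrix (Fin dA) (Fin dA) ℂ)) := by
    apply Matrix.PosSemidef.mul_mul_conjTranspose_same
    refine Matrix.posSemidef_diagonal_iff.mpr fun i => ?_
    simp only [Function.comp_apply]
    rw [Complex.zero_le_real]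
    exact abs_nonneg _
  have hB2 : ((U : Matrix (Fin dA) (Fin dA) ℂ) *
      Matrix.diagonal ((↑) ∘ (fun i => |x i|)) * star (U : Matrix (Fin dA) (Fin dA) ℂ)) ^ 2
      = (ρA - (dA : ℂ)⁻¹ • 1)ᴴ * (ρA - (dA : ℂ)⁻¹ • 1) := by
    have hherm : (ρA - (dA : ℂ)⁻¹ • 1).IsHermitian := by
      apply hρ.1.sub
      rw [Matrix.IsHermitian, Matrix.conjTranspose_smul, Matrix.conjTranspose_one]
      congr 1
      simp [starRingEnd_apply, star_inv₀]
    rw [hherm.eq, hΔ, pow_two, conj_diag_mul, conj_diag_mul]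
    congr 2
    ext i j
    by_cases hij : i = j
    · subst hij
      simp only [Matrix.diagonal_apply_eq, Pi.mul_apply, Function.comp_apply,
        ← Complex.ofReal_mul, abs_mul_abs_self]
    · simp [Matrix.diagonal_apply_ne _ hij]
  have htn : traceNorm (ρA - (dA : ℂ)⁻¹ • 1) = ∑ i, |x i| := by
    rw [traceNorm, ← hBpsd.eq_sqrt_of_sq_eq _ hB2, trace_conj_diag, Matrix.trace_diagonal]
    simp [← Complex.ofReal_sum]
  have hsum1 : ∑ i, lam i = 1 := by
    have h := hρ.1.spectral_theorem
    have h2 : ρA.trace = ∑ i, (lam i : ℂ) := by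
      conv_lhs => rw [h]
      rw [Unitary.conjStarAlgAut_apply, trace_conj_diag, Matrix.trace_diagonal]
      rfl
    rw [hρtr] at h2
    have := congrArg Complex.re h2
    simpa [← Complex.ofReal_sum] using this.symm
  have hsum0 : ∑ i, x i = 0 := by
    have hd : (dA : ℝ) ≠ 0 := Nat.cast_ne_zero.mpr (NeZero.ne dA)
    simp only [hx, Finset.sum_sub_distrib, hsum1, Finset.sum_const, Finset.card_univ,
      Fintype.card_fin, nsmul_eq_mul]
    field_simp
    norm_num
  intro i
  have habs : |x i| ≤ δ := by
    have h1 : ∑ j ∈ Finset.univ.erase i, x j = - x i := by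
      rw [Finset.sum_erase_eq_sub (Finset.mem_univ i), hsum0]; ring
    have h2 : |x i| ≤ ∑ j ∈ Finset.univ.erase i, |x j| := by
      calc |x i| = |∑ j ∈ Finset.univ.erase i, x j| := by rw [h1, abs_neg]
        _ ≤ ∑ j ∈ Finset.univ.erase i, |x j| := Finset.abs_sum_le_sum_abs _ _
    have h3 : ∑ j, |x j| = |x i| + ∑ j ∈ Finset.univ.erase i, |x j| :=
      (Finset.add_sum_erase _ _ (Finset.mem_univ i)).symm
    have hδ2 : traceNorm (ρA - (dA : ℂ)⁻¹ • 1) ≤ 2 * δ := by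
      have := hδ
      rw [traceDist] at this
      linarith
    nlinarith [htn ▸ hδ2]
  have := abs_le.mp habs
  simp only [hx] at this
  linarith [this.1]

/-- `⟨z|V √ρ_A V†|z⟩ ≥ r_z √(d_A (1 − 2 d_A δ))` where
`r_z = ⟨z|V V†|z⟩ / d_A`, when `D(ρ_A, 1/d_A) ≤ δ ≤ 1/(2 d_A)`. -/
theorem sqrt_overlap_lower_bound {dA M : ℕ} [NeZero dA]
    (V : Matrix (Fin M) (Fin dA) ℂ) (hV : Vᴴ * V = 1)
    (e : Fin M → Fin M → ℂ)
    (he : ∀ z w, dotProduct (star (e z)) (e w) = if z = w then 1 else 0)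
    (ρA : Matrix (Fin dA) (Fin dA) ℂ) (hρ : ρA.PosSemidef) (hρtr : ρA.trace = 1)
    (δ : ℝ) (hδ : traceDist ρA ((dA : ℂ)⁻¹ • 1) ≤ δ) (hδ' : δ ≤ 1 / (2 * dA)) :
    ∀ z, ((dA : ℝ)⁻¹ * (dotProduct (star (e z)) ((V * Vᴴ).mulVec (e z))).re)
          * Real.sqrt (dA * (1 - 2 * dA * δ))
        ≤ (dotProduct (star (e z)) ((V * hρ.sqrt * Vᴴ).mulVec (e z))).re := by
  intro z
  classical
  set U := hρ.1.eigenvectorUnitary with hU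
  set lam := hρ.1.eigenvalues with hlam
  set w : Fin dA → ℂ := Vᴴ *ᵥ (e z) with hw
  set u : Fin dA → ℂ := star (U : Matrix (Fin dA) (Fin dA) ℂ) *ᵥ w with hu2
  have hsw : star (e z) ᵥ* V = star w := by
    rw [hw, Matrix.star_mulVec, Matrix.conjTranspose_conjTranspose]
  have hq : ∀ A : Matrix (Fin dA) (Fin dA) ℂ,
      dotProduct (star (e z)) ((V * A * Vᴴ) *ᵥ (e z))
        = dotProduct (star w) (A *ᵥ w) := by
    intro A
    rw [← Matrix.mulVec_mulVec, ← Matrix.mulVec_mulVec, Matrix.dotProduct_mulVec, hsw, hw]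
  have hsq : hρ.sqrt = (U : Matrix (Fin dA) (Fin dA) ℂ) *
      Matrix.diagonal ((↑) ∘ (Real.sqrt ∘ lam)) * star (U : Matrix (Fin dA) (Fin dA) ℂ) := rfl
  have hR : (dotProduct (star (e z)) ((V * hρ.sqrt * Vᴴ) *ᵥ (e z))).re
      = ∑ i, Real.sqrt (lam i) * Complex.normSq (u i) := by
    rw [hq _, hsq, quad_conj_diag]
    simp only [Function.comp_apply, ← hu2, ← Complex.ofReal_mul, ← Complex.ofReal_sum,
      Complex.ofReal_re]
  have hUone : (U : Matrix (Fin dA) (Fin dA) ℂ) *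
      Matrix.diagonal ((↑) ∘ (fun _ : Fin dA => (1 : ℝ))) *
      star (U : Matrix (Fin dA) (Fin dA) ℂ) = 1 := by
    have h1 : Matrix.diagonal ((↑) ∘ (fun _ : Fin dA => (1 : ℝ)) : Fin dA → ℂ) = 1 := by
      ext i j
      by_cases hij : i = j <;> simp [Matrix.diagonal_apply, Matrix.one_apply, hij]
    rw [h1, Matrix.mul_one, Matrix.mem_unitaryGroup_iff.mp U.2]
  have hL : (dotProduct (star (e z)) ((V * Vᴴ) *ᵥ (e z))).re
      = ∑ i, Complex.normSq (u i) := by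
    have h2 : V * Vᴴ = V * ((U : Matrix (Fin dA) (Fin dA) ℂ) *
        Matrix.diagonal ((↑) ∘ (fun _ : Fin dA => (1 : ℝ))) *
        star (U : Matrix (Fin dA) (Fin dA) ℂ)) * Vᴴ := by
      rw [hUone, Matrix.mul_one]
    rw [h2, hq _, quad_conj_diag]
    simp only [← hu2, Complex.ofReal_one, one_mul, ← Complex.ofReal_sum, Complex.ofReal_re]
  rw [hL, hR]
  have hdpos : (0 : ℝ) < dA := by exact_mod_cast Nat.pos_of_ne_zero (NeZero.ne dA)
  have hc : 0 ≤ 1 - 2 * dA * δ := by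
    rw [le_div_iff₀ (by positivity)] at hδ'
    nlinarith
  have hev := eigenvalue_bound ρA hρ hρtr δ hδ
  have hkey : (dA : ℝ)⁻¹ * Real.sqrt ((dA : ℝ) * (1 - 2 * dA * δ))
      = Real.sqrt ((dA : ℝ)⁻¹ - 2 * δ) := by
    rw [show (dA : ℝ)⁻¹ = Real.sqrt ((dA : ℝ)⁻¹ * (dA : ℝ)⁻¹) from
        (Real.sqrt_mul_self (by positivity)).symm,
      ← Real.sqrt_mul (by positivity)]
    congr 1
    rw [Real.sqrt_mul_self (by positivity)]
    field_simp
  calc (dA : ℝ)⁻¹ * (∑ i, Complex.normSq (u i)) * Real.sqrt ((dA : ℝ) * (1 - 2 * dA * δ))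
      = (∑ i, Complex.normSq (u i)) * ((dA : ℝ)⁻¹ * Real.sqrt ((dA : ℝ) * (1 - 2 * dA * δ))) := by
        ring
    _ = ∑ i, Complex.normSq (u i) * Real.sqrt ((dA : ℝ)⁻¹ - 2 * δ) := by
        rw [hkey, Finset.sum_mul]
    _ ≤ ∑ i, Real.sqrt (lam i) * Complex.normSq (u i) := by
        refine Finset.sum_le_sum fun i _ => ?_
        rw [mul_comm]
        exact mul_le_mul_of_nonneg_right (Real.sqrt_le_sqrt (hev i)) (Complex.normSq_nonneg _)
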